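/- Let F be a field of characteristic 0 and s(y) = y² + a₃y³ + a₄y⁴ + ⋯ ∈ F[[y]]. Then the formal differential equation y²·ψ'(y) = s(ψ(y)) has a solution ψ ∈ F[[y]] of the form ψ(y) = y + c₂y² + ⋯ if and only if a₃ = 0. -/

import Mathlib

/-!
Write `ψ = y + c₂y² + c₃y³ + ⋯`. In degree `n + 1` the left side `y²ψ'` contributes
`n cₙ`. On the right (where `a₁ = 0`, `a₂ = 1`), `cₙ` enters `s(ψ)` only through `ψ²`,
contributing `2cₙ`, since `ψᵏ - (ψ mod yⁿ)ᵏ` is divisible by `y^(n+k-1)`. So for `n ≥ 2` the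
equation in degree `n + 1` reads `(n - 2) cₙ = [y^(n+1)] s(ψ mod yⁿ)`. For `n ≥ 3` this determines `cₙ` from the earlier
coefficients; for `n = 2` it reads `0 = [y³] s(y) = a₃`.
-/

open PowerSeries

/-- Formal composition `f(ψ)` of power series, defined coefficientwise (this is the usual
substitution when `ψ` has zero constant term). -/
noncomputable def PowerSeries.compose {F : Type*} [CommRing F]
    (f ψ : PowerSeries F) : PowerSeries F :=
  PowerSeries.mk fun n => PowerSeries.coeff n (Polynomial.aeval ψ (f.trunc (n + 1)))

theorem pow_add_dvd_pow_succ_sub_pow_succ {R : Type*} [CommRing R] {x a b : R} {n : ℕ}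
    (ha : x ∣ a) (hb : x ∣ b) (hab : x ^ n ∣ a - b) (k : ℕ) :
    x ^ (n + k) ∣ a ^ (k + 1) - b ^ (k + 1) := by
  induction k with
  | zero => simpa using hab
  | succ k ih =>
    have hsplit : a ^ (k + 2) - b ^ (k + 2) =
        a ^ (k + 1) * (a - b) + (a ^ (k + 1) - b ^ (k + 1)) * b := by ring
    rw [hsplit]
    refine dvd_add ?_ ?_
    · rw [show n + (k + 1) = k + 1 + n by omega, pow_add]
      exact mul_dvd_mul (pow_dvd_pow_of_dvd ha _) hab
    · rw [← add_assoc, pow_succ]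
      exact mul_dvd_mul ih hb

namespace PowerSeries

variable {R : Type*} [CommRing R]

theorem coeff_compose_eq_sum (s : R⟦X⟧) {ψ : R⟦X⟧} (hψ : constantCoeff ψ = 0) {m N : ℕ}
    (hmN : m < N) :
    coeff m (compose s ψ) = ∑ k ∈ Finset.range N, coeff k s * coeff m (ψ ^ k) := by
  have hsmall : ∀ k, m < k → coeff m (ψ ^ k) = 0 := fun k hk =>
    X_pow_dvd_iff.1 (pow_dvd_pow_of_dvd (X_dvd_iff.2 hψ) k) m hk
  rw [compose, coeff_mk, trunc_apply, map_sum]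
  simp only [Nat.Ico_zero_eq_range, Polynomial.aeval_monomial, algebraMap_eq, map_sum,
    coeff_C_mul]
  refine Finset.sum_subset (Finset.range_subset_range.2 hmN) fun k _ hk => ?_
  rw [hsmall k (by simp at hk; omega), mul_zero]

theorem compose_X (s : R⟦X⟧) : compose s X = s := by
  ext m
  rw [coeff_compose_eq_sum s constantCoeff_X (Nat.lt_succ_self m)]
  simp [coeff_X_pow]

theorem coeff_succ_X_sq_mul_derivativeFun (f : R⟦X⟧) (n : ℕ) :
    coeff (n + 1) (X ^ 2 * f.derivativeFun) = n * coeff n f := by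
  rcases n with _ | n
  · simp [coeff_X_pow_mul']
  · rw [show n + 1 + 1 = n + 2 by rfl, coeff_X_pow_mul, mul_comm]
    push_cast
    exact coeff_derivative f n

theorem coe_trunc_two_eq_X (ψ : R⟦X⟧) (h0 : constantCoeff ψ = 0) (h1 : coeff 1 ψ = 1) :
    (trunc 2 ψ : R⟦X⟧) = X := by
  ext m
  rcases m with _ | _ | m <;> simp [coeff_trunc, coeff_X, h0, h1]

theorem coeff_succ_compose_eq_compose_trunc_add {s ψ : R⟦X⟧} (hs1 : coeff 1 s = 0)
    (hψ : constantCoeff ψ = 0) {n : ℕ} (hn : 2 ≤ n) :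
    coeff (n + 1) (compose s ψ) =
      coeff (n + 1) (compose s (trunc n ψ)) + 2 * coeff 2 s * coeff 1 ψ * coeff n ψ := by
  set T : R⟦X⟧ := ↑(trunc n ψ)
  have hcoeffT : ∀ m, coeff m T = if m < n then coeff m ψ else 0 := fun m => by
    rw [Polynomial.coeff_coe, coeff_trunc]
  have hT : constantCoeff T = 0 := by
    rw [← coeff_zero_eq_constantCoeff_apply, hcoeffT, if_pos (by omega),
      coeff_zero_eq_constantCoeff_apply, hψ]
  obtain ⟨g, hg⟩ : X ^ n ∣ ψ - T := X_pow_dvd_iff.2 fun m hm => by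
    rw [map_sub, hcoeffT, if_pos hm, sub_self]
  have hg0 : constantCoeff g = coeff n ψ := by
    simpa [coeff_X_pow_mul', hcoeffT] using (congrArg (coeff n) hg).symm
  have hsq : coeff (n + 1) (ψ ^ 2) = coeff (n + 1) (T ^ 2) + 2 * coeff 1 ψ * coeff n ψ := by
    have : ψ ^ 2 = T ^ 2 + X ^ n * ((ψ + T) * g) := by rw [mul_left_comm, ← hg]; ring
    rw [this, map_add, add_comm n 1, coeff_X_pow_mul, coeff_one_mul, map_add, map_add, hψ, hT,
      hcoeffT, if_pos (by omega), hg0]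
    ring
  have hhigh : ∀ k, 3 ≤ k → coeff (n + 1) (ψ ^ k) = coeff (n + 1) (T ^ k) := fun k hk => by
    obtain ⟨j, rfl⟩ : ∃ j, k = j + 1 := ⟨k - 1, by omega⟩
    rw [← sub_eq_zero, ← map_sub]
    exact X_pow_dvd_iff.1 (pow_add_dvd_pow_succ_sub_pow_succ (X_dvd_iff.2 hψ) (X_dvd_iff.2 hT)
      ⟨g, hg⟩ j) _ (by omega)
  rw [coeff_compose_eq_sum s hψ (Nat.lt_succ_self _),
    coeff_compose_eq_sum s hT (Nat.lt_succ_self _), ← sub_eq_iff_eq_add',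
    ← Finset.sum_sub_distrib, Finset.sum_eq_single 2]
  · rw [hsq]; ring
  · intro k _ hk2
    rcases (show k = 0 ∨ k = 1 ∨ 3 ≤ k by omega) with rfl | rfl | hk
    · simp
    · simp [hs1]
    · rw [hhigh k hk, sub_self]
  · exact fun h => absurd (Finset.mem_range.2 (by omega)) h

end PowerSeries

section Coefficients

variable {R : Type*} [CommRing R] {s ψ : R⟦X⟧}

theorem coeff_X_sq_mul_derivativeFun_eq_coeff_compose_of_le_two (hs0 : constantCoeff s = 0)
    (hs1 : coeff 1 s = 0) (hs2 : coeff 2 s = 1) (hψ0 : constantCoeff ψ = 0)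
    (hψ1 : coeff 1 ψ = 1) {m : ℕ} (hm : m ≤ 2) :
    coeff m (X ^ 2 * ψ.derivativeFun) = coeff m (compose s ψ) := by
  rw [coeff_compose_eq_sum s hψ0 (show m < 3 by omega)]
  interval_cases m
  · simp [Finset.sum_range_succ, hs0, hψ0]
  · simp [Finset.sum_range_succ, hs1, pow_two, coeff_one_mul, hψ0]
  · have hlhs : coeff 2 (X ^ 2 * ψ.derivativeFun) = 1 := by
      simpa [hψ1] using coeff_succ_X_sq_mul_derivativeFun ψ 1
    rw [hlhs]
    simp [Finset.sum_range_succ, hs0, hs1, hs2, hψ0, hψ1, pow_two, coeff_mul,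
      Finset.Nat.antidiagonal_succ]

theorem coeff_succ_X_sq_mul_derivativeFun_eq_coeff_compose_iff (hs1 : coeff 1 s = 0)
    (hs2 : coeff 2 s = 1) (hψ0 : constantCoeff ψ = 0) (hψ1 : coeff 1 ψ = 1) {n : ℕ}
    (hn : 2 ≤ n) :
    coeff (n + 1) (X ^ 2 * ψ.derivativeFun) = coeff (n + 1) (compose s ψ) ↔
      ((n : R) - 2) * coeff n ψ = coeff (n + 1) (compose s (trunc n ψ)) := by
  rw [coeff_succ_X_sq_mul_derivativeFun, coeff_succ_compose_eq_compose_trunc_add hs1 hψ0 hn, hs2,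
    hψ1]
  constructor <;> intro h <;> linear_combination h

end Coefficients

section Solution

variable {F : Type*} [Field F] (s : F⟦X⟧)

-- `c₂` is arbitrary: the equation in degree 3 does not involve it.
noncomputable def odeSolutionCoeff (n : ℕ) : F :=
  if n = 1 then 1
  else if 3 ≤ n then
    coeff (n + 1) (compose s (mk fun k => if k < n then odeSolutionCoeff k else 0)) / (n - 2)
  else 0
decreasing_by assumption

noncomputable def odeSolution : F⟦X⟧ := mk (odeSolutionCoeff s)

theorem constantCoeff_odeSolution : constantCoeff (odeSolution s) = 0 := by
  rw [← coeff_zero_eq_constantCoeff_apply, odeSolution, coeff_mk, odeSolutionCoeff]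
  simp

theorem coeff_one_odeSolution : coeff 1 (odeSolution s) = 1 := by
  rw [odeSolution, coeff_mk, odeSolutionCoeff, if_pos rfl]

theorem odeSolution_recurrence [CharZero F] {n : ℕ} (hn : 3 ≤ n) :
    ((n : F) - 2) * coeff n (odeSolution s) =
      coeff (n + 1) (compose s (trunc n (odeSolution s))) := by
  have htrunc : (trunc n (odeSolution s) : F⟦X⟧) =
      mk fun k => if k < n then odeSolutionCoeff s k else 0 := by
    ext k
    rw [Polynomial.coeff_coe, coeff_trunc, coeff_mk, odeSolution, coeff_mk]
  have hn2 : (n : F) - 2 ≠ 0 := by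
    rw [sub_ne_zero, ← Nat.cast_ofNat, Ne, Nat.cast_inj]
    omega
  rw [htrunc, odeSolution, coeff_mk, odeSolutionCoeff, if_neg (by omega), if_pos hn,
    mul_div_cancel₀ _ hn2]

end Solution

/-- Let `F` be a field of characteristic `0` and
`s(y) = y² + a₃y³ + a₄y⁴ + ⋯ ∈ F[[y]]`.  Then the formal differential equation
`y²·ψ'(y) = s(ψ(y))` has a solution `ψ ∈ F[[y]]` of the form `ψ(y) = y + c₂y² + ⋯`
if and only if `a₃ = 0`. -/
theorem formal_ode_order_two_solvable_iff
    (F : Type*) [Field F] [CharZero F] (s : PowerSeries F)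
    (hs0 : PowerSeries.constantCoeff s = 0)
    (hs1 : PowerSeries.coeff 1 s = 0)
    (hs2 : PowerSeries.coeff 2 s = 1) :
    (∃ ψ : PowerSeries F,
      PowerSeries.constantCoeff ψ = 0 ∧
      PowerSeries.coeff 1 ψ = 1 ∧
      PowerSeries.X ^ 2 * ψ.derivativeFun = PowerSeries.compose s ψ) ↔
    PowerSeries.coeff 3 s = 0 := by
  constructor
  · rintro ⟨ψ, hψ0, hψ1, hode⟩
    have h3 := (coeff_succ_X_sq_mul_derivativeFun_eq_coeff_compose_iff hs1 hs2 hψ0 hψ1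
      le_rfl).1 (congrArg (coeff 3) hode)
    rwa [coe_trunc_two_eq_X ψ hψ0 hψ1, compose_X, Nat.cast_ofNat, sub_self, zero_mul,
      eq_comm] at h3
  · intro ha3
    have hψ0 := constantCoeff_odeSolution s
    have hψ1 := coeff_one_odeSolution s
    refine ⟨odeSolution s, hψ0, hψ1, ext fun m => ?_⟩
    rcases le_or_gt m 2 with hm | hm
    · exact coeff_X_sq_mul_derivativeFun_eq_coeff_compose_of_le_two hs0 hs1 hs2 hψ0 hψ1 hm
    obtain ⟨n, rfl⟩ : ∃ n, m = n + 1 := ⟨m - 1, by omega⟩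
    rw [coeff_succ_X_sq_mul_derivativeFun_eq_coeff_compose_iff hs1 hs2 hψ0 hψ1 (by omega)]
    rcases (show n = 2 ∨ 3 ≤ n by omega) with rfl | hn
    · rw [coe_trunc_two_eq_X _ hψ0 hψ1, compose_X, ha3, Nat.cast_ofNat, sub_self, zero_mul]
    · exact odeSolution_recurrence s hn
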